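/- For integers k, l ≥ 2 and a real parameter t, define the interpolated double zeta value ζ^t(a,b) = ζ(a,b) + t·ζ(a+b) for a ≥ 2, b ≥ 1. Then ζ(k)·ζ(l) = ∑_{i=1}^{k} C(k+l-i-1, l-1) · ζ^t(k+l-i, i) + ∑_{i=1}^{l} C(k+l-i-1, k-1) · ζ^t(k+l-i, i) − C(k+l, k) · t · ζ(k+l). -/

import Mathlib

open Finset

/-- The Riemann zeta value `ζ(s) = ∑_{m ≥ 1} 1/m^s`. -/
noncomputable def zetaVal (s : ℕ) : ℝ :=
  ∑' m : ℕ, if 1 ≤ m then 1 / (m : ℝ) ^ s else 0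

/-- The double zeta value `ζ(a,b) = ∑_{m > n ≥ 1} 1/(m^a n^b)`. -/
noncomputable def doubleZeta (a b : ℕ) : ℝ :=
  ∑' p : ℕ × ℕ, if 1 ≤ p.2 ∧ p.2 < p.1 then 1 / ((p.1 : ℝ) ^ a * (p.2 : ℝ) ^ b) else 0

/-- The interpolated double zeta value `ζ^t(a,b) = ζ(a,b) + t·ζ(a+b)`. -/
noncomputable def tDoubleZeta (t : ℝ) (a b : ℕ) : ℝ :=
  doubleZeta a b + t * zetaVal (a + b)

/-!
For `x, y > 0` the relation `1/(xy) = 1/((x+y)x) + 1/((x+y)y)`, iterated, expands `1/(x^k y^l)`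
into the terms `C(k+l-i-1, l-1) / ((x+y)^(k+l-i) x^i)` and `C(k+l-i-1, k-1) / ((x+y)^(k+l-i) y^i)`;
after clearing denominators this is a polynomial identity, proved by induction with Pascal's rule.
Summing it over `x, y ≥ 1` and putting `m = x + y` gives Euler's decomposition of `ζ(k) ζ(l)` into
double zeta values. Passing to `ζ^t` adds `t ζ(k+l)` times the sum of all coefficients, which is
`C(k+l, k)` by the hockey-stick identity.
-/

section
variable {R : Type*} [CommSemiring R] (x y : R)

/-- `x^(k+1) y^(l+1) (x+y)^(k+l+1)` times the `x`-part of the partial fraction expansion of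
`1 / (x^(k+1) y^(l+1))`. -/
def partialFractionNumerator (k l : ℕ) : R :=
  ∑ j ∈ range (k + 1), ((l + j).choose l : R) * x ^ j * y ^ (l + 1) * (x + y) ^ (k - j)

@[simp]
lemma partialFractionNumerator_zero_left (l : ℕ) :
    partialFractionNumerator x y 0 l = y ^ (l + 1) := by
  simp [partialFractionNumerator]

lemma partialFractionNumerator_succ_left (k l : ℕ) :
    partialFractionNumerator x y (k + 1) l =
      (x + y) * partialFractionNumerator x y k l +
        ((l + (k + 1)).choose l : R) * x ^ (k + 1) * y ^ (l + 1) := by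
  rw [partialFractionNumerator, sum_range_succ, Nat.sub_self, pow_zero, mul_one,
    partialFractionNumerator, mul_sum]
  congr 1
  refine sum_congr rfl fun j hj => ?_
  rw [Nat.sub_add_comm (mem_range_succ_iff.mp hj), pow_succ]
  ring

lemma partialFractionNumerator_succ_succ (k l : ℕ) :
    partialFractionNumerator x y (k + 1) (l + 1) =
      y * partialFractionNumerator x y (k + 1) l + x * partialFractionNumerator x y k (l + 1) := by
  have pascal (j : ℕ) : ((l + 1 + j).choose (l + 1) : R) =
      ((l + j).choose l : R) + ((l + j).choose (l + 1) : R) := by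
    rw [add_right_comm, Nat.choose_succ_succ', Nat.cast_add]
  rw [partialFractionNumerator]
  simp only [pascal, add_mul, sum_add_distrib]
  congr 1
  · rw [partialFractionNumerator, mul_sum]
    exact sum_congr rfl fun j _ => by ring
  · rw [partialFractionNumerator, mul_sum, sum_range_succ',
      Nat.choose_eq_zero_of_lt (by omega : l + 0 < l + 1), Nat.cast_zero, zero_mul, zero_mul,
      zero_mul, add_zero]
    refine sum_congr rfl fun j _ => ?_
    rw [show l + (j + 1) = l + 1 + j by omega, Nat.add_sub_add_right]
    ring

theorem add_pow_eq_partialFractionNumerator_add (k l : ℕ) :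
    (x + y) ^ (k + l + 1) =
      partialFractionNumerator x y k l + partialFractionNumerator y x l k := by
  induction k generalizing l with
  | zero =>
    induction l with
    | zero => simp [add_comm]
    | succ l ih =>
      rw [partialFractionNumerator_succ_left, add_comm y x,
        show 0 + (l + 1) + 1 = 0 + l + 1 + 1 by ring, pow_succ', ih]
      simp only [partialFractionNumerator_zero_left, zero_add, Nat.choose_zero_right, Nat.cast_one,
        one_mul, pow_one]
      ring
  | succ k ihk =>
    induction l with
    | zero =>
      rw [partialFractionNumerator_succ_left, pow_succ, ihk 0]
      simp only [partialFractionNumerator_zero_left, zero_add, Nat.choose_zero_right, Nat.cast_one,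
        one_mul, pow_one]
      ring
    | succ l ihl =>
      have split : (x + y) ^ (k + 1 + (l + 1) + 1) =
          x * (x + y) ^ (k + (l + 1) + 1) + y * (x + y) ^ (k + 1 + l + 1) := by ring
      rw [partialFractionNumerator_succ_succ, partialFractionNumerator_succ_succ, split, ihk, ihl]
      ring
end

lemma sum_Icc_one_eq_sum_range_sub {M : Type*} [AddCommMonoid M] (f : ℕ → M) (n : ℕ) :
    ∑ i ∈ Icc 1 n, f i = ∑ j ∈ range n, f (n - j) := by
  rw [range_eq_Ico, sum_Ico_reflect f 0 n.le_succ, Nat.add_sub_cancel_left, Nat.sub_zero,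
    Ico_add_one_right_eq_Icc]

section
variable {K : Type*} [Field K] {x y : K}

lemma partialFractionNumerator_div_eq_sum (hx : x ≠ 0) (hy : y ≠ 0) (hxy : x + y ≠ 0) {k l : ℕ}
    (hk : 1 ≤ k) (hl : 1 ≤ l) :
    partialFractionNumerator x y (k - 1) (l - 1) / (x ^ k * y ^ l * (x + y) ^ (k + l - 1)) =
      ∑ i ∈ Icc 1 k, ((k + l - i - 1).choose (l - 1) : K) / ((x + y) ^ (k + l - i) * x ^ i) := by
  obtain ⟨k, rfl⟩ := Nat.exists_eq_add_of_le' hk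
  obtain ⟨l, rfl⟩ := Nat.exists_eq_add_of_le' hl
  rw [sum_Icc_one_eq_sum_range_sub, partialFractionNumerator, sum_div]
  refine sum_congr rfl fun j hj => ?_
  obtain ⟨a, rfl⟩ := Nat.exists_eq_add_of_le (mem_range_succ_iff.mp hj)
  rw [show j + a + 1 + (l + 1) - (j + a + 1 - j) - 1 = l + j by omega,
    show j + a + 1 + (l + 1) - (j + a + 1 - j) = l + 1 + j by omega,
    show j + a + 1 + (l + 1) - 1 = j + a + l + 1 by omega,
    show j + a + 1 - j = a + 1 by omega, Nat.add_sub_cancel, Nat.add_sub_cancel,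
    Nat.add_sub_cancel_left]
  field_simp
  ring

theorem one_div_pow_mul_one_div_pow_eq_sum (hx : x ≠ 0) (hy : y ≠ 0) (hxy : x + y ≠ 0) {k l : ℕ}
    (hk : 1 ≤ k) (hl : 1 ≤ l) :
    1 / x ^ k * (1 / y ^ l) =
      ∑ i ∈ Icc 1 k, ((k + l - i - 1).choose (l - 1) : K) / ((x + y) ^ (k + l - i) * x ^ i) +
        ∑ i ∈ Icc 1 l, ((k + l - i - 1).choose (k - 1) : K) / ((x + y) ^ (k + l - i) * y ^ i) := by
  have hyx := partialFractionNumerator_div_eq_sum hy hx (add_comm x y ▸ hxy) hl hk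
  rw [add_comm y x, add_comm l k, mul_comm (y ^ l)] at hyx
  rw [← partialFractionNumerator_div_eq_sum hx hy hxy hk hl, ← hyx, ← add_div,
    ← add_pow_eq_partialFractionNumerator_add, show k - 1 + (l - 1) + 1 = k + l - 1 by omega]
  field_simp
end

lemma zetaVal_eq_tsum_add_one (s : ℕ) : zetaVal s = ∑' m : ℕ, 1 / ((m : ℝ) + 1) ^ s := by
  rw [zetaVal, ← (add_left_injective 1).tsum_eq]
  · simp
  · intro m hm
    obtain ⟨hm, -⟩ := not_forall.mp (mt ite_eq_right_iff.mpr hm)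
    exact ⟨m - 1, Nat.sub_add_cancel hm⟩

lemma summable_one_div_nat_add_one_pow {s : ℕ} (hs : 2 ≤ s) :
    Summable fun m : ℕ => 1 / ((m : ℝ) + 1) ^ s := by
  exact_mod_cast (summable_nat_add_iff 1).mpr (Real.summable_one_div_nat_pow.mpr hs)

lemma doubleZeta_eq_tsum_add_one (a b : ℕ) :
    doubleZeta a b = ∑' p : ℕ × ℕ, 1 / (((p.1 : ℝ) + 1 + (p.2 + 1)) ^ a * ((p.1 : ℝ) + 1) ^ b) := by
  have hinj : Function.Injective fun p : ℕ × ℕ => (p.1 + p.2 + 2, p.1 + 1) := by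
    intro p q h
    simp only [Prod.mk.injEq] at h
    exact Prod.ext (by omega) (by omega)
  rw [doubleZeta, ← hinj.tsum_eq]
  · refine tsum_congr fun p => ?_
    rw [if_pos (by omega)]
    push_cast
    ring
  · rintro ⟨m, n⟩ hp
    obtain ⟨hmn, -⟩ := not_forall.mp (mt ite_eq_right_iff.mpr hp)
    exact ⟨(n - 1, m - n - 1), by simp only [Prod.mk.injEq]; omega⟩

lemma doubleZeta_eq_tsum_add_one' (a b : ℕ) :
    doubleZeta a b = ∑' p : ℕ × ℕ, 1 / (((p.1 : ℝ) + 1 + (p.2 + 1)) ^ a * ((p.2 : ℝ) + 1) ^ b) := by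
  rw [doubleZeta_eq_tsum_add_one, ← (Equiv.prodComm ℕ ℕ).tsum_eq]
  refine tsum_congr fun p => ?_
  simp only [Equiv.prodComm_apply, Prod.fst_swap, Prod.snd_swap]
  ring

lemma Summable.of_nonneg_of_finsetSum_le {ι β : Type*} {s : Finset ι} {f : ι → β → ℝ} {F : β → ℝ}
    (hF : Summable F) (hf : ∀ i ∈ s, ∀ b, 0 ≤ f i b) (hle : ∀ b, ∑ i ∈ s, f i b ≤ F b) {i : ι}
    (hi : i ∈ s) : Summable (f i) :=
  hF.of_nonneg_of_le (hf i hi) fun b => (single_le_sum (fun j hj => hf j hj b) hi).trans (hle b)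

theorem zetaVal_mul_zetaVal_eq_sum_doubleZeta {k l : ℕ} (hk : 2 ≤ k) (hl : 2 ≤ l) :
    zetaVal k * zetaVal l =
      ∑ i ∈ Icc 1 k, ((k + l - i - 1).choose (l - 1) : ℝ) * doubleZeta (k + l - i) i +
        ∑ i ∈ Icc 1 l, ((k + l - i - 1).choose (k - 1) : ℝ) * doubleZeta (k + l - i) i := by
  set A : ℕ → ℕ × ℕ → ℝ := fun i p => ((k + l - i - 1).choose (l - 1) : ℝ) *
    (1 / (((p.1 : ℝ) + 1 + (p.2 + 1)) ^ (k + l - i) * ((p.1 : ℝ) + 1) ^ i))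
  set B : ℕ → ℕ × ℕ → ℝ := fun i p => ((k + l - i - 1).choose (k - 1) : ℝ) *
    (1 / (((p.1 : ℝ) + 1 + (p.2 + 1)) ^ (k + l - i) * ((p.2 : ℝ) + 1) ^ i))
  have hA_nonneg : ∀ i ∈ Icc 1 k, ∀ p, 0 ≤ A i p := fun _ _ _ => by positivity
  have hB_nonneg : ∀ i ∈ Icc 1 l, ∀ p, 0 ≤ B i p := fun _ _ _ => by positivity
  have hprod : Summable fun p : ℕ × ℕ => 1 / ((p.1 : ℝ) + 1) ^ k * (1 / ((p.2 : ℝ) + 1) ^ l) :=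
    (summable_one_div_nat_add_one_pow hk).mul_of_nonneg (summable_one_div_nat_add_one_pow hl)
      (fun _ => by positivity) (fun _ => by positivity)
  have hsplit (p : ℕ × ℕ) : 1 / ((p.1 : ℝ) + 1) ^ k * (1 / ((p.2 : ℝ) + 1) ^ l) =
      ∑ i ∈ Icc 1 k, A i p + ∑ i ∈ Icc 1 l, B i p := by
    have hx : (p.1 : ℝ) + 1 ≠ 0 := by positivity
    have hy : (p.2 : ℝ) + 1 ≠ 0 := by positivity
    rw [one_div_pow_mul_one_div_pow_eq_sum hx hy (by positivity) (by omega : 1 ≤ k)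
      (by omega : 1 ≤ l)]
    simp only [A, B, mul_one_div]
  have hA : ∀ i ∈ Icc 1 k, Summable (A i) := fun i => hprod.of_nonneg_of_finsetSum_le hA_nonneg
    fun p => (hsplit p).symm ▸ le_add_of_nonneg_right (sum_nonneg fun i hi => hB_nonneg i hi p)
  have hB : ∀ i ∈ Icc 1 l, Summable (B i) := fun i => hprod.of_nonneg_of_finsetSum_le hB_nonneg
    fun p => (hsplit p).symm ▸ le_add_of_nonneg_left (sum_nonneg fun i hi => hA_nonneg i hi p)
  rw [zetaVal_eq_tsum_add_one, zetaVal_eq_tsum_add_one, Summable.tsum_mul_tsum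
    (summable_one_div_nat_add_one_pow hk) (summable_one_div_nat_add_one_pow hl) hprod,
    tsum_congr hsplit, (summable_sum hA).tsum_add (summable_sum hB), Summable.tsum_finsetSum hA,
    Summable.tsum_finsetSum hB]
  simp only [A, B, tsum_mul_left, ← doubleZeta_eq_tsum_add_one, ← doubleZeta_eq_tsum_add_one']

lemma sum_Icc_choose_sub_one {k l : ℕ} (hl : 1 ≤ l) :
    ∑ i ∈ Icc 1 k, (k + l - i - 1).choose (l - 1) = (k + l - 1).choose l := by
  obtain ⟨l, rfl⟩ := Nat.exists_eq_add_of_le' hl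
  rw [sum_Icc_one_eq_sum_range_sub]
  rcases k with _ | k
  · simp
  · have hterm : ∀ j ∈ range (k + 1), (k + 1 + (l + 1) - (k + 1 - j) - 1).choose (l + 1 - 1) =
        (j + l).choose l := fun j hj => by
      rw [show k + 1 + (l + 1) - (k + 1 - j) - 1 = j + l by have := mem_range.mp hj; omega,
        Nat.add_sub_cancel]
    rw [sum_congr rfl hterm, Nat.sum_range_add_choose,
      show k + 1 + (l + 1) - 1 = k + l + 1 by omega]

theorem sum_Icc_choose_add_sum_Icc_choose {k l : ℕ} (hk : 1 ≤ k) (hl : 1 ≤ l) :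
    ∑ i ∈ Icc 1 k, (k + l - i - 1).choose (l - 1) + ∑ i ∈ Icc 1 l, (k + l - i - 1).choose (k - 1) =
      (k + l).choose k := by
  have hlk := sum_Icc_choose_sub_one (k := l) hk
  rw [add_comm l k] at hlk
  rw [sum_Icc_choose_sub_one hl, hlk]
  obtain ⟨k, rfl⟩ := Nat.exists_eq_add_of_le' hk
  obtain ⟨l, rfl⟩ := Nat.exists_eq_add_of_le' hl
  rw [show k + 1 + (l + 1) = k + l + 1 + 1 by omega, Nat.choose_succ_succ', Nat.add_sub_cancel,
    Nat.choose_symm_of_eq_add (by omega : k + l + 1 = l + 1 + k)]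

lemma sum_mul_tDoubleZeta (t : ℝ) (c : ℕ → ℝ) {n N : ℕ} (hn : n ≤ N) :
    ∑ i ∈ Icc 1 n, c i * tDoubleZeta t (N - i) i =
      ∑ i ∈ Icc 1 n, c i * doubleZeta (N - i) i + (∑ i ∈ Icc 1 n, c i) * t * zetaVal N := by
  rw [sum_mul, sum_mul, ← sum_add_distrib]
  refine sum_congr rfl fun i hi => ?_
  rw [tDoubleZeta, Nat.sub_add_cancel ((mem_Icc.mp hi).2.trans hn)]
  ring

theorem euler_decomposition_interpolated (t : ℝ) (k l : ℕ) (hk : 2 ≤ k) (hl : 2 ≤ l) :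
    zetaVal k * zetaVal l =
      ∑ i ∈ Finset.Icc 1 k,
          (Nat.choose (k + l - i - 1) (l - 1) : ℝ) * tDoubleZeta t (k + l - i) i +
        ∑ i ∈ Finset.Icc 1 l,
          (Nat.choose (k + l - i - 1) (k - 1) : ℝ) * tDoubleZeta t (k + l - i) i -
        (Nat.choose (k + l) k : ℝ) * t * zetaVal (k + l) := by
  have hchoose : (∑ i ∈ Icc 1 k, ((k + l - i - 1).choose (l - 1) : ℝ)) +
      ∑ i ∈ Icc 1 l, ((k + l - i - 1).choose (k - 1) : ℝ) = ((k + l).choose k : ℝ) := by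
    exact_mod_cast sum_Icc_choose_add_sum_Icc_choose (by omega : 1 ≤ k) (by omega : 1 ≤ l)
  rw [sum_mul_tDoubleZeta t _ (Nat.le_add_right k l),
    sum_mul_tDoubleZeta t _ (Nat.le_add_left l k), zetaVal_mul_zetaVal_eq_sum_doubleZeta hk hl,
    ← hchoose]
  ring
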